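/- arXiv:1005.0118 — 2 statements merged into one kernel-verified Lean document; each statement's English description precedes it below -/
import Mathlib

section
/- There exists a well-ordering on the set (X,Ω) of Ω-words over a well-ordered set X and well-ordered operation set Ω (which may include unary operations) that is monomial, i.e., compatible with substitution into any ⋆-Ω-word. -/
/- Ω-words over a set X of variables and a set Op of operation symbols with
   arities given by `ar : Op → ℕ`. -/
inductive OW (X Op : Type) (ar : Op → ℕ) : Type
  | var : X → OW X Op ar
  | node : (f : Op) → (Fin (ar f) → OW X Op ar) → OW X Op ar

namespace OW

variable {X Op : Type} {ar : Op → ℕ}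

/-- number of occurrences of variables, |u|_X -/
def sizeX : OW X Op ar → ℕ
  | var _ => 1
  | node _ ts => ∑ i, sizeX (ts i)

/-- number of occurrences of operation symbols, |u|_Ω -/
def sizeOp : OW X Op ar → ℕ
  | var _ => 0
  | node _ ts => 1 + ∑ i, sizeOp (ts i)

/-- The ordering comparing wt(u) = (|u|_Ω + |u|_X, |u|_X, δ, u_1, ..., u_n)
    lexicographically, with wt(x) = (1, x) for variables. -/
inductive OLt [LinearOrder X] [LinearOrder Op] : OW X Op ar → OW X Op ar → Prop
  | size {u v : OW X Op ar} :
      sizeOp u + sizeX u < sizeOp v + sizeX v → OLt u v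
  | var {x y : X} : x < y → OLt (var x) (var y)
  | szX {f g : Op} {ts : Fin (ar f) → OW X Op ar} {ss : Fin (ar g) → OW X Op ar} :
      sizeOp (node f ts) + sizeX (node f ts) = sizeOp (node g ss) + sizeX (node g ss) →
      sizeX (node f ts) < sizeX (node g ss) → OLt (node f ts) (node g ss)
  | opsym {f g : Op} {ts : Fin (ar f) → OW X Op ar} {ss : Fin (ar g) → OW X Op ar} :
      sizeOp (node f ts) + sizeX (node f ts) = sizeOp (node g ss) + sizeX (node g ss) →
      sizeX (node f ts) = sizeX (node g ss) →
      f < g → OLt (node f ts) (node g ss)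
  | args {f : Op} {ts ss : Fin (ar f) → OW X Op ar} :
      sizeOp (node f ts) + sizeX (node f ts) = sizeOp (node f ss) + sizeX (node f ss) →
      sizeX (node f ts) = sizeX (node f ss) →
      (i : Fin (ar f)) → (∀ j, j < i → ts j = ss j) → OLt (ts i) (ss i) →
      OLt (node f ts) (node f ss)

end OW

namespace OW

variable {X Op : Type} {ar : Op → ℕ}

/-- weight of a word -/
def wt (u : OW X Op ar) : ℕ := sizeOp u + sizeX u

lemma wt_var (x : X) : wt (var (Op := Op) (ar := ar) x) = 1 := rfl

lemma sizeX_node (f : Op) (ts : Fin (ar f) → OW X Op ar) :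
    sizeX (node f ts) = ∑ i, sizeX (ts i) := rfl

lemma wt_node (f : Op) (ts : Fin (ar f) → OW X Op ar) :
    wt (node f ts) = 1 + ∑ i, wt (ts i) := by
  simp only [wt, sizeOp, sizeX, Finset.sum_add_distrib]
  ring

lemma one_le_wt (u : OW X Op ar) : 1 ≤ wt u := by
  cases u with
  | var x => simp [wt, sizeX, sizeOp]
  | node f ts => rw [wt_node]; omega

lemma wt_child_lt (f : Op) (ts : Fin (ar f) → OW X Op ar) (i : Fin (ar f)) :
    wt (ts i) < wt (node f ts) := by
  rw [wt_node]
  have h : wt (ts i) ≤ ∑ j, wt (ts j) := by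
    simpa using Finset.single_le_sum (f := fun j => wt (ts j)) (fun j _ => Nat.zero_le _)
      (Finset.mem_univ i)
  omega

lemma sizeX_lt_wt_node (f : Op) (ts : Fin (ar f) → OW X Op ar) :
    sizeX (node f ts) < wt (node f ts) := by
  rw [wt_node, sizeX_node]
  have : ∑ i, sizeX (ts i) ≤ ∑ i, wt (ts i) :=
    Finset.sum_le_sum fun i _ => by unfold wt; omega
  omega

lemma one_le_sizeX (har : ∀ f, 1 ≤ ar f) (u : OW X Op ar) : 1 ≤ sizeX u := by
  induction u with
  | var x => simp [sizeX]
  | node f ts ih =>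
    obtain ⟨i⟩ : Nonempty (Fin (ar f)) := ⟨⟨0, har f⟩⟩
    calc 1 ≤ sizeX (ts i) := ih i
      _ ≤ ∑ j, sizeX (ts j) := by
        simpa using Finset.single_le_sum (f := fun j => sizeX (ts j))
          (fun j _ => Nat.zero_le _) (Finset.mem_univ i)
      _ = sizeX (node f ts) := (sizeX_node f ts).symm

lemma two_le_wt_node (har : ∀ f, 1 ≤ ar f) (f : Op) (ts : Fin (ar f) → OW X Op ar) :
    2 ≤ wt (node f ts) := by
  have h1 := one_le_sizeX har (node f ts)
  have h2 := sizeX_lt_wt_node f ts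
  omega

lemma sum_update_apply {ι : Type*} [Fintype ι] [DecidableEq ι] {α : Type*}
    (g : α → ℕ) (ts : ι → α) (i : ι) (a : α) :
    ∑ j, g (Function.update ts i a j) = g a + ∑ j ∈ Finset.univ \ {i}, g (ts j) := by
  calc ∑ j, g (Function.update ts i a j)
      = ∑ j, Function.update (fun j => g (ts j)) i (g a) j :=
        Finset.sum_congr rfl fun j _ => Function.apply_update (fun _ y => g y) ts i a j
    _ = g a + ∑ j ∈ Finset.univ \ {i}, g (ts j) :=
        Finset.sum_update_of_mem (Finset.mem_univ i) _ _

variable [LinearOrder X] [LinearOrder Op]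

lemma olt_key {a b : OW X Op ar} (h : OLt a b) :
    wt a < wt b ∨ (wt a = wt b ∧ sizeX a < sizeX b) ∨ (wt a = wt b ∧ sizeX a = sizeX b) := by
  cases h with
  | size h => exact Or.inl h
  | var h => exact Or.inr (Or.inr ⟨rfl, rfl⟩)
  | szX h1 h2 => exact Or.inr (Or.inl ⟨h1, h2⟩)
  | opsym h1 h2 _ => exact Or.inr (Or.inr ⟨h1, h2⟩)
  | args h1 h2 i hpre hlt => exact Or.inr (Or.inr ⟨h1, h2⟩)

end OW

namespace OW

variable {X Op : Type} {ar : Op → ℕ} [LinearOrder X] [LinearOrder Op]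

lemma olt_szx_aux (har : ∀ f, 1 ≤ ar f) {a c : OW X Op ar}
    (hw : wt a = wt c) (hx : sizeX a < sizeX c) : OLt a c := by
  cases a with
  | var x =>
    cases c with
    | var z => exact absurd hx (by simp [sizeX])
    | node h rr =>
      exact absurd hw (by have := two_le_wt_node har h rr; rw [wt_var]; omega)
  | node f ts =>
    cases c with
    | var z =>
      have h1 := one_le_sizeX har (node (X := X) f ts)
      have h2 : sizeX (var (X := X) (Op := Op) (ar := ar) z) = 1 := rfl
      exact absurd hx (by omega)
    | node h rr => exact OLt.szX hw hx

lemma olt_trans (har : ∀ f, 1 ≤ ar f) :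
    ∀ (b a c : OW X Op ar), OLt a b → OLt b c → OLt a c := by
  intro b
  induction b with
  | var y =>
    intro a c hab hbc
    rcases olt_key hab with h1 | ⟨h1, hx1⟩ | ⟨h1, hx1⟩ <;>
      rcases olt_key hbc with h2 | ⟨h2, hx2⟩ | ⟨h2, hx2⟩ <;>
      first
      | exact OLt.size (show wt a < wt c by omega)
      | exact olt_szx_aux har (h1.trans h2) (by omega)
      | (cases hab with
        | size h => exact absurd (show wt a < wt (var y) from h) (by omega)
        | var h =>
          cases hbc with
          | size h' => exact absurd (show wt (var y) < wt c from h') (by omega)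
          | var h' => exact OLt.var (h.trans h'))
  | node g ss ih =>
    intro a c hab hbc
    rcases olt_key hab with h1 | ⟨h1, hx1⟩ | ⟨h1, hx1⟩ <;>
      rcases olt_key hbc with h2 | ⟨h2, hx2⟩ | ⟨h2, hx2⟩ <;>
      first
      | exact OLt.size (show wt a < wt c by omega)
      | exact olt_szx_aux har (h1.trans h2) (by omega)
      | (cases hab with
        | size h => exact absurd (show wt a < wt (node g ss) from h) (by omega)
        | szX hww hxx => exact absurd hxx (by omega)
        | opsym hww hxx hf =>
          cases hbc with
          | size h' => exact absurd (show wt (node g ss) < wt c from h') (by omega)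
          | szX hww' hxx' => exact absurd hxx' (by omega)
          | opsym hww' hxx' hf' =>
            exact OLt.opsym (hww.trans hww') (hxx.trans hxx') (hf.trans hf')
          | args hww' hxx' i' hpre' hlt' =>
            exact OLt.opsym (hww.trans hww') (hxx.trans hxx') hf
        | args hww hxx i hpre hlt =>
          cases hbc with
          | size h' => exact absurd (show wt (node g ss) < wt c from h') (by omega)
          | szX hww' hxx' => exact absurd hxx' (by omega)
          | opsym hww' hxx' hf' =>
            exact OLt.opsym (hww.trans hww') (hxx.trans hxx') hf'
          | args hww' hxx' i' hpre' hlt' =>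
            rcases lt_trichotomy i i' with hii | hii | hii
            · refine OLt.args (hww.trans hww') (hxx.trans hxx') i
                (fun j hj => (hpre j hj).trans (hpre' j (hj.trans hii))) ?_
              rw [hpre' i hii] at hlt
              exact hlt
            · subst hii
              exact OLt.args (hww.trans hww') (hxx.trans hxx') i
                (fun j hj => (hpre j hj).trans (hpre' j hj)) (ih i _ _ hlt hlt')
            · refine OLt.args (hww.trans hww') (hxx.trans hxx') i'
                (fun j hj => (hpre j (hj.trans hii)).trans (hpre' j hj)) ?_
              rw [← hpre i' hii] at hlt'
              exact hlt')

end OW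

namespace OW

variable {X Op : Type} {ar : Op → ℕ} [LinearOrder X] [LinearOrder Op]
  [WellFoundedLT X] [WellFoundedLT Op]

/-- auxiliary target of the weight-level embedding -/
def wfT (X Op : Type) (ar : Op → ℕ) : Type :=
  ℕ × (X ⊕ (Σ' g : Op, Fin (ar g) → OW X Op ar))

/-- relation on the target, with component relation `r'` on argument tuples -/
def wfR (r' : OW X Op ar → OW X Op ar → Prop) : wfT X Op ar → wfT X Op ar → Prop :=
  Prod.Lex (· < ·) (Sum.Lex (· < ·)
    (PSigma.Lex (· < ·) (fun g => Pi.Lex (· < ·) (fun {_} => r'))))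

/-- the embedding -/
def wfPhi : OW X Op ar → wfT X Op ar := fun u =>
  (sizeX u, match u with
    | var x => Sum.inl x
    | node f ts => Sum.inr ⟨f, ts⟩)

lemma olt_acc : ∀ n, ∀ u : OW X Op ar, wt u ≤ n → Acc OLt u := by
  intro n
  induction n with
  | zero =>
    intro u hu
    exact absurd hu (by have := one_le_wt u; omega)
  | succ n ihn =>
    intro u hu
    set r' : OW X Op ar → OW X Op ar → Prop := fun a b => wt a ≤ n ∧ OLt a b with hr'def
    have hr' : WellFounded r' := by
      constructor
      intro b
      constructor
      intro a ha
      exact Subrelation.accessible (fun {x y} h => h.2) (ihn a ha.1)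
    have hR : WellFounded (wfR r') :=
      WellFounded.prod_lex wellFounded_lt
        (Sum.lex_wf wellFounded_lt
          (WellFounded.psigma_lex wellFounded_lt
            (fun g => Pi.Lex.wellFounded (· < ·) (fun _ : Fin (ar g) => hr'))))
    have hmono : ∀ u v : OW X Op ar, wt u ≤ n + 1 → wt v = wt u → OLt v u →
        wfR r' (wfPhi v) (wfPhi u) := by
      intro u v hu hw h
      cases h with
      | size h => exact absurd (show wt _ < wt _ from h) (by omega)
      | @var x y h =>
        show wfR r' (1, Sum.inl x) (1, Sum.inl y)
        exact Prod.Lex.right _ (Sum.Lex.inl h)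
      | szX h hx => exact Prod.Lex.left _ _ hx
      | @opsym f g ts ss h hx hf =>
        show wfR r' (sizeX (node f ts), Sum.inr ⟨f, ts⟩)
          (sizeX (node g ss), Sum.inr ⟨g, ss⟩)
        unfold wfR
        rw [hx]
        exact Prod.Lex.right _ (Sum.Lex.inr (PSigma.Lex.left _ _ hf))
      | @args f ts ss h hx i hpre hlt =>
        show wfR r' (sizeX (node f ts), Sum.inr ⟨f, ts⟩)
          (sizeX (node f ss), Sum.inr ⟨f, ss⟩)
        unfold wfR
        rw [hx]
        refine Prod.Lex.right _ (Sum.Lex.inr (PSigma.Lex.right f ?_))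
        refine ⟨i, fun j hj => hpre j hj, ⟨?_, hlt⟩⟩
        have h1 : wt (ts i) < wt (node f ts) := wt_child_lt f ts i
        have h2 : wt (node f ts) = wt (node f ss) := hw
        omega
    have main : ∀ t : wfT X Op ar, ∀ u : OW X Op ar,
        wt u ≤ n + 1 → wfPhi u = t → Acc OLt u := by
      intro t
      induction t using hR.induction with
      | _ t ih =>
        intro u hu hphi
        constructor
        intro v hv
        have hwv : wt v ≤ wt u := by
          rcases olt_key hv with h | ⟨h, _⟩ | ⟨h, _⟩ <;> omega
        by_cases hvn : wt v ≤ n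
        · exact ihn v hvn
        · have hwvu : wt v = wt u := by omega
          exact ih (wfPhi v) (hphi ▸ hmono u v hu hwvu hv) v (by omega) rfl
    exact main (wfPhi u) u hu rfl

lemma olt_wf : WellFounded (OLt (X := X) (Op := Op) (ar := ar)) :=
  ⟨fun u => olt_acc (wt u) u le_rfl⟩

end OW

/-- A ⋆-Ω-word: a term over X ∪ {⋆} with exactly one occurrence of ⋆. -/
inductive OCtx (X Op : Type) (ar : Op → ℕ) : Type
  | hole : OCtx X Op ar
  | node : (f : Op) → (i : Fin (ar f)) → OCtx X Op ar →
      (Fin (ar f) → OW X Op ar) → OCtx X Op ar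

/-- Substitution of an Ω-word for ⋆ in a ⋆-Ω-word: w|_u. -/
def OCtx.subst {X Op : Type} {ar : Op → ℕ} : OCtx X Op ar → OW X Op ar → OW X Op ar
  | .hole, u => u
  | .node f i c ts, u => OW.node f (Function.update ts i (c.subst u))

namespace OW

variable {X Op : Type} {ar : Op → ℕ} [LinearOrder X] [LinearOrder Op]

lemma olt_trichot (har : ∀ f, 1 ≤ ar f) :
    ∀ a b : OW X Op ar, OLt a b ∨ a = b ∨ OLt b a := by
  classical
  intro a
  induction a with
  | var x =>
    intro b
    cases b with
    | var y =>
      rcases lt_trichotomy x y with h | h | h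
      · exact Or.inl (OLt.var h)
      · exact Or.inr (Or.inl (by rw [h]))
      · exact Or.inr (Or.inr (OLt.var h))
    | node g ss =>
      refine Or.inl (OLt.size ?_)
      show wt (var x) < wt (node g ss)
      have := two_le_wt_node har g ss
      rw [wt_var]; omega
  | node f ts ih =>
    intro b
    cases b with
    | var y =>
      refine Or.inr (Or.inr (OLt.size ?_))
      show wt (var y) < wt (node f ts)
      have := two_le_wt_node har f ts
      rw [wt_var]; omega
    | node g ss =>
      rcases lt_trichotomy (wt (node f ts)) (wt (node g ss)) with hw | hw | hw
      · exact Or.inl (OLt.size hw)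
      · rcases lt_trichotomy (sizeX (node f ts)) (sizeX (node g ss)) with hx | hx | hx
        · exact Or.inl (OLt.szX hw hx)
        · rcases lt_trichotomy f g with hf | hf | hf
          · exact Or.inl (OLt.opsym hw hx hf)
          · subst hf
            by_cases hts : ts = ss
            · exact Or.inr (Or.inl (by rw [hts]))
            · set s : Finset (Fin (ar f)) := Finset.univ.filter (fun i => ts i ≠ ss i) with hsdef
              have hs : s.Nonempty := by
                by_contra hemp
                apply hts
                funext j
                by_contra hj
                exact hemp ⟨j, by simp [hsdef, hj]⟩
              set i := s.min' hs with hidef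
              have hi : ts i ≠ ss i := by
                have := s.min'_mem hs
                simpa [hsdef] using this
              have hpre : ∀ j, j < i → ts j = ss j := by
                intro j hj
                by_contra hne
                have hjs : j ∈ s := by simp [hsdef, hne]
                exact absurd (s.min'_le j hjs) (not_le.mpr hj)
              rcases ih i (ss i) with h | h | h
              · exact Or.inl (OLt.args hw hx i hpre h)
              · exact absurd h hi
              · exact Or.inr (Or.inr
                  (OLt.args hw.symm hx.symm i (fun j hj => (hpre j hj).symm) h))
          · exact Or.inr (Or.inr (OLt.opsym hw.symm hx.symm hf))
        · exact Or.inr (Or.inr (OLt.szX hw.symm hx))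
      · exact Or.inr (Or.inr (OLt.size hw))

lemma olt_update {f : Op} {ts : Fin (ar f) → OW X Op ar} {i : Fin (ar f)}
    {a b : OW X Op ar} (h : OLt a b) :
    OLt (node f (Function.update ts i a)) (node f (Function.update ts i b)) := by
  classical
  have hwa : wt (node f (Function.update ts i a))
      = 1 + (wt a + ∑ j ∈ Finset.univ \ {i}, wt (ts j)) := by
    rw [wt_node, sum_update_apply]
  have hwb : wt (node f (Function.update ts i b))
      = 1 + (wt b + ∑ j ∈ Finset.univ \ {i}, wt (ts j)) := by
    rw [wt_node, sum_update_apply]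
  have hxa : sizeX (node f (Function.update ts i a))
      = sizeX a + ∑ j ∈ Finset.univ \ {i}, sizeX (ts j) := by
    rw [sizeX_node, sum_update_apply]
  have hxb : sizeX (node f (Function.update ts i b))
      = sizeX b + ∑ j ∈ Finset.univ \ {i}, sizeX (ts j) := by
    rw [sizeX_node, sum_update_apply]
  rcases olt_key h with h1 | ⟨h1, h2⟩ | ⟨h1, h2⟩
  · refine OLt.size ?_
    show wt (node f (Function.update ts i a)) < wt (node f (Function.update ts i b))
    omega
  · refine OLt.szX ?_ ?_
    · show wt (node f (Function.update ts i a)) = wt (node f (Function.update ts i b))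
      omega
    · omega
  · refine OLt.args ?_ ?_ i (fun j hj => ?_) ?_
    · show wt (node f (Function.update ts i a)) = wt (node f (Function.update ts i b))
      omega
    · omega
    · rw [Function.update_of_ne (ne_of_lt hj), Function.update_of_ne (ne_of_lt hj)]
    · simpa only [Function.update_self] using h

end OW

lemma olt_subst {X Op : Type} {ar : Op → ℕ} [LinearOrder X] [LinearOrder Op]
    {u v : OW X Op ar} (w : OCtx X Op ar) (h : OW.OLt v u) :
    OW.OLt (w.subst v) (w.subst u) := by
  induction w with
  | hole => exact h
  | node f i c ts ih => exact OW.olt_update ih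

/-- there exists a monomial well-ordering on the set of Ω-words over
a well-ordered set X and a well-ordered operation set Ω (arities ≥ 1, unary
operations allowed): a well-ordering compatible with substitution into any
⋆-Ω-word. -/
theorem exists_monomial_wellOrder (X Op : Type) [LinearOrder X] [WellFoundedLT X]
    [LinearOrder Op] [WellFoundedLT Op] (ar : Op → ℕ) (har : ∀ f, 1 ≤ ar f) :
    ∃ r : OW X Op ar → OW X Op ar → Prop, IsWellOrder (OW X Op ar) r ∧
      ∀ (w : OCtx X Op ar) (u v : OW X Op ar), r v u → r (w.subst v) (w.subst u) := by
  refine ⟨OW.OLt, ?_, fun w u v h => olt_subst w h⟩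
  exact { trichotomous := fun a b h1 h2 => ((OW.olt_trichot har a b).resolve_left h1).resolve_right h2
          wf := OW.olt_wf }
end

section
/- Let S be a set of monic Ω-polynomials in k(X,Ω) with a monomial well-ordering. The following are equivalent: (I) S is a Gröbner–Shirshov basis; (II) for every nonzero f ∈ Id(S), the leading word f̄ equals u|_{s̄} for some s ∈ S and ⋆-Ω-word u; (III) the set Irr(S) of Ω-words that contain no leading word of any element of S as a subword is a k-basis of the quotient Ω-algebra k(X,Ω)/Id(S). -/
section GSB

variable {X Op : Type} {ar : Op → ℕ} {k : Type} [Field k]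

/-- Ω-polynomials: the free Ω-algebra k(X,Ω) as the k-space with basis the Ω-words. -/
abbrev OPoly (X Op : Type) (ar : Op → ℕ) (k : Type) [Field k] := OW X Op ar →₀ k

/-- The s-Ω-word u|_s, extended linearly in s. -/
noncomputable def applyC (c : OCtx X Op ar) (f : OPoly X Op ar k) : OPoly X Op ar k :=
  Finsupp.mapDomain c.subst f

variable [LinearOrder (OW X Op ar)]

/-- `IsLw f w`: w is the leading Ω-word of f. -/
def IsLw (f : OPoly X Op ar k) (w : OW X Op ar) : Prop :=
  w ∈ f.support ∧ ∀ v ∈ f.support, v ≤ w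

/-- f is monic: its leading coefficient is 1. -/
def Monic (f : OPoly X Op ar k) : Prop := ∃ w, IsLw f w ∧ f w = 1

/-- The Ω-ideal of k(X,Ω) generated by S. -/
noncomputable def IdS (S : Set (OPoly X Op ar k)) : Submodule k (OPoly X Op ar k) :=
  Submodule.span k {g | ∃ (c : OCtx X Op ar) (s : OPoly X Op ar k), s ∈ S ∧ g = applyC c s}

/-- h is trivial modulo (S, w): h = Σ αᵢ uᵢ|_{sᵢ} with sᵢ ∈ S and uᵢ|_{s̄ᵢ} < w. -/
def TrivMod (S : Set (OPoly X Op ar k)) (w : OW X Op ar) (h : OPoly X Op ar k) : Prop :=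
  ∃ (n : ℕ) (α : Fin n → k) (c : Fin n → OCtx X Op ar) (s : Fin n → OPoly X Op ar k),
    (∀ i, s i ∈ S) ∧ h = ∑ i, α i • applyC (c i) (s i) ∧
    ∀ i ws, IsLw (s i) ws → (c i).subst ws < w

/-- S is a Gröbner–Shirshov basis: every inclusion composition
(f,g)_w = f − u|_g, with w = f̄ = u|_{ḡ}, is trivial modulo (S, w). -/
def IsGSB (S : Set (OPoly X Op ar k)) : Prop :=
  ∀ f ∈ S, ∀ g ∈ S, ∀ (c : OCtx X Op ar) (wf wg : OW X Op ar),
    IsLw f wf → IsLw g wg → wf = c.subst wg → TrivMod S wf (f - applyC c g)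

end GSB
section CD
set_option linter.unusedSectionVars false

open Finsupp

variable {X Op : Type} {ar : Op → ℕ} {k : Type} [Field k]

/-- Composition of ⋆-Ω-words. -/
def OCtx.comp : OCtx X Op ar → OCtx X Op ar → OCtx X Op ar
  | .hole, d => d
  | .node f i c ts, d => .node f i (c.comp d) ts

lemma OCtx.subst_comp (c d : OCtx X Op ar) (u : OW X Op ar) :
    (c.comp d).subst u = c.subst (d.subst u) := by
  induction c with
  | hole => rfl
  | node f i c ts ih => simp [OCtx.comp, OCtx.subst, ih]

variable [LinearOrder (OW X Op ar)]

lemma subst_le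
    (hmon : ∀ (c : OCtx X Op ar) (u v : OW X Op ar), u < v → c.subst u < c.subst v)
    (c : OCtx X Op ar) {u v : OW X Op ar} (h : u ≤ v) : c.subst u ≤ c.subst v := by
  rcases lt_or_eq_of_le h with h | h
  · exact (hmon c u v h).le
  · rw [h]

lemma subst_inj
    (hmon : ∀ (c : OCtx X Op ar) (u v : OW X Op ar), u < v → c.subst u < c.subst v)
    (c : OCtx X Op ar) : Function.Injective c.subst := by
  intro u v h
  rcases lt_trichotomy u v with hlt | he | hlt
  · exact absurd h (hmon c u v hlt).ne
  · exact he
  · exact absurd h.symm (hmon c v u hlt).ne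

lemma applyC_eq_lmap (c : OCtx X Op ar) :
    (applyC c : OPoly X Op ar k → OPoly X Op ar k) = ⇑(Finsupp.lmapDomain k k c.subst) := rfl

lemma applyC_add (c : OCtx X Op ar) (p q : OPoly X Op ar k) :
    applyC c (p + q) = applyC c p + applyC c q := Finsupp.mapDomain_add

lemma applyC_sub (c : OCtx X Op ar) (p q : OPoly X Op ar k) :
    applyC c (p - q) = applyC c p - applyC c q := by
  rw [applyC_eq_lmap]; exact map_sub _ _ _

lemma applyC_smul (c : OCtx X Op ar) (a : k) (p : OPoly X Op ar k) :
    applyC c (a • p) = a • applyC c p := by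
  rw [applyC_eq_lmap]; exact map_smul _ _ _

lemma applyC_single (c : OCtx X Op ar) (u : OW X Op ar) (a : k) :
    applyC c (Finsupp.single u a) = Finsupp.single (c.subst u) a :=
  Finsupp.mapDomain_single

lemma applyC_applyC (c d : OCtx X Op ar) (p : OPoly X Op ar k) :
    applyC c (applyC d p) = applyC (c.comp d) p := by
  unfold applyC
  rw [← Finsupp.mapDomain_comp]
  apply Finsupp.mapDomain_congr
  intro u _
  exact (OCtx.subst_comp c d u).symm

lemma applyC_apply
    (hmon : ∀ (c : OCtx X Op ar) (u v : OW X Op ar), u < v → c.subst u < c.subst v)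
    (c : OCtx X Op ar) (p : OPoly X Op ar k) (u : OW X Op ar) :
    (applyC c p) (c.subst u) = p u :=
  Finsupp.mapDomain_apply (subst_inj hmon c) _ _

lemma supp_applyC {c : OCtx X Op ar} {p : OPoly X Op ar k} {v : OW X Op ar}
    (h : v ∈ (applyC c p).support) : ∃ u ∈ p.support, v = c.subst u := by
  classical
  have := Finsupp.mapDomain_support (f := c.subst) h
  rcases Finset.mem_image.mp this with ⟨u, hu, he⟩
  exact ⟨u, hu, he.symm⟩

lemma applyC_eq_sum (c : OCtx X Op ar) (p : OPoly X Op ar k) :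
    applyC c p = ∑ u ∈ p.support, p u • Finsupp.single (c.subst u) (1 : k) := by
  unfold applyC
  rw [Finsupp.mapDomain]
  rw [Finsupp.sum]
  apply Finset.sum_congr rfl
  intro u _
  rw [Finsupp.smul_single, smul_eq_mul, mul_one]

lemma IsLw.unique {f : OPoly X Op ar k} {w w' : OW X Op ar}
    (h : IsLw f w) (h' : IsLw f w') : w = w' :=
  le_antisymm (h'.2 w h.1) (h.2 w' h'.1)

lemma exists_isLw {f : OPoly X Op ar k} (hf : f ≠ 0) : ∃ w, IsLw f w := by
  have hne : f.support.Nonempty := Finsupp.support_nonempty_iff.mpr hf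
  exact ⟨f.support.max' hne, f.support.max'_mem hne, fun v hv => Finset.le_max' _ v hv⟩

lemma IsLw.ne_zero {f : OPoly X Op ar k} {w : OW X Op ar} (h : IsLw f w) : f ≠ 0 := by
  intro h0; rw [h0] at h
  simpa using h.1

lemma IsLw.applyC
    (hmon : ∀ (c : OCtx X Op ar) (u v : OW X Op ar), u < v → c.subst u < c.subst v)
    {s : OPoly X Op ar k} {ws : OW X Op ar} (h : IsLw s ws) (c : OCtx X Op ar) :
    IsLw (applyC c s) (c.subst ws) := by
  constructor
  · rw [Finsupp.mem_support_iff, applyC_apply hmon]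
    exact Finsupp.mem_support_iff.mp h.1
  · intro v hv
    rcases supp_applyC hv with ⟨u, hu, rfl⟩
    exact subst_le hmon c (h.2 u hu)


/-- An entry of a representation: coefficient, context, element of S, and its leading word. -/
structure Ent (X Op : Type) (ar : Op → ℕ) (k : Type) [Field k] : Type where
  a : k
  c : OCtx X Op ar
  s : OPoly X Op ar k
  w : OW X Op ar

/-- The polynomial represented by an entry. -/
noncomputable def Ent.term (e : Ent X Op ar k) : OPoly X Op ar k := e.a • applyC e.c e.s

/-- The leading word of the term of an entry. -/
def Ent.wrd (e : Ent X Op ar k) : OW X Op ar := e.c.subst e.w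

/-- The entry is well-formed with respect to S. -/
def Ent.Ok (S : Set (OPoly X Op ar k)) (e : Ent X Op ar k) : Prop := e.s ∈ S ∧ IsLw e.s e.w

noncomputable def sumE (L : List (Ent X Op ar k)) : OPoly X Op ar k := (L.map Ent.term).sum

@[simp] lemma sumE_nil : sumE ([] : List (Ent X Op ar k)) = 0 := rfl

@[simp] lemma sumE_cons (e : Ent X Op ar k) (L : List (Ent X Op ar k)) :
    sumE (e :: L) = e.term + sumE L := by simp [sumE]

lemma sumE_append (L₁ L₂ : List (Ent X Op ar k)) :
    sumE (L₁ ++ L₂) = sumE L₁ + sumE L₂ := by simp [sumE]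

lemma sumE_apply_ne {L : List (Ent X Op ar k)} {v : OW X Op ar}
    (h : sumE L v ≠ 0) : ∃ e ∈ L, e.term v ≠ 0 := by
  induction L with
  | nil => simp [sumE] at h
  | cons e L ih =>
    rw [sumE_cons, Finsupp.add_apply] at h
    by_cases h1 : e.term v = 0
    · rw [h1, zero_add] at h
      rcases ih h with ⟨e', he', hv⟩
      exact ⟨e', List.mem_cons_of_mem _ he', hv⟩
    · exact ⟨e, List.mem_cons_self, h1⟩

lemma term_apply_le
    (hmon : ∀ (c : OCtx X Op ar) (u v : OW X Op ar), u < v → c.subst u < c.subst v)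
    {e : Ent X Op ar k} (hlw : IsLw e.s e.w) {v : OW X Op ar}
    (h : e.term v ≠ 0) : v ≤ e.wrd := by
  have h2 : (applyC e.c e.s) v ≠ 0 := by
    intro h0; rw [Ent.term, Finsupp.smul_apply, h0, smul_zero] at h; exact h rfl
  rcases supp_applyC (Finsupp.mem_support_iff.mpr h2) with ⟨u, hu, rfl⟩
  exact subst_le hmon _ (hlw.2 u hu)

lemma sumE_apply_le
    (hmon : ∀ (c : OCtx X Op ar) (u v : OW X Op ar), u < v → c.subst u < c.subst v)
    {L : List (Ent X Op ar k)} {b : OW X Op ar}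
    (hL : ∀ e ∈ L, IsLw e.s e.w ∧ e.wrd ≤ b) {v : OW X Op ar}
    (h : sumE L v ≠ 0) : v ≤ b := by
  rcases sumE_apply_ne h with ⟨e, he, hv⟩
  exact le_trans (term_apply_le hmon (hL e he).1 hv) (hL e he).2

/-- List version of `TrivMod`. -/
def LRep (S : Set (OPoly X Op ar k)) (w : OW X Op ar) (h : OPoly X Op ar k) : Prop :=
  ∃ L : List (Ent X Op ar k), (∀ e ∈ L, e.Ok S ∧ e.wrd < w) ∧ h = sumE L

lemma LRep.zero {S : Set (OPoly X Op ar k)} {w : OW X Op ar} : LRep S w 0 :=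
  ⟨[], by simp, rfl⟩

lemma LRep.add {S : Set (OPoly X Op ar k)} {w : OW X Op ar} {h₁ h₂ : OPoly X Op ar k}
    (H₁ : LRep S w h₁) (H₂ : LRep S w h₂) : LRep S w (h₁ + h₂) := by
  rcases H₁ with ⟨L₁, hL₁, rfl⟩; rcases H₂ with ⟨L₂, hL₂, rfl⟩
  refine ⟨L₁ ++ L₂, ?_, (sumE_append _ _).symm⟩
  intro e he
  rcases List.mem_append.mp he with h | h
  · exact hL₁ e h
  · exact hL₂ e h

lemma LRep.smul {S : Set (OPoly X Op ar k)} {w : OW X Op ar} {h : OPoly X Op ar k}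
    (a : k) (H : LRep S w h) : LRep S w (a • h) := by
  rcases H with ⟨L, hL, rfl⟩
  refine ⟨L.map (fun e => ⟨a * e.a, e.c, e.s, e.w⟩), ?_, ?_⟩
  · intro e he
    rcases List.mem_map.mp he with ⟨e', he', rfl⟩
    exact hL e' he'
  · induction L with
    | nil => simp
    | cons e L ih =>
      rw [List.map_cons, sumE_cons, sumE_cons, smul_add, ih (fun e he => hL e (List.mem_cons_of_mem _ he))]
      congr 1
      show a • (e.a • applyC e.c e.s) = (Ent.term ⟨a * e.a, e.c, e.s, e.w⟩)
      rw [Ent.term, mul_smul]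

lemma LRep.neg {S : Set (OPoly X Op ar k)} {w : OW X Op ar} {h : OPoly X Op ar k}
    (H : LRep S w h) : LRep S w (-h) := by
  have := H.smul (-1 : k)
  rwa [neg_one_smul] at this

lemma LRep.single {S : Set (OPoly X Op ar k)} {w : OW X Op ar}
    {s : OPoly X Op ar k} {ws : OW X Op ar} (a : k) (c : OCtx X Op ar)
    (hs : s ∈ S) (hlw : IsLw s ws) (hlt : c.subst ws < w) :
    LRep S w (a • applyC c s) := by
  refine ⟨[⟨a, c, s, ws⟩], ?_, by simp [Ent.term]⟩
  intro e he
  rcases List.mem_singleton.mp he with rfl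
  exact ⟨⟨hs, hlw⟩, hlt⟩

lemma LRep.mono {S : Set (OPoly X Op ar k)} {w w' : OW X Op ar} {h : OPoly X Op ar k}
    (H : LRep S w h) (hw : w ≤ w') : LRep S w' h := by
  rcases H with ⟨L, hL, rfl⟩
  exact ⟨L, fun e he => ⟨(hL e he).1, lt_of_lt_of_le (hL e he).2 hw⟩, rfl⟩

lemma LRep.lift
    (hmon : ∀ (c : OCtx X Op ar) (u v : OW X Op ar), u < v → c.subst u < c.subst v)
    {S : Set (OPoly X Op ar k)} {w : OW X Op ar} {h : OPoly X Op ar k}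
    (C : OCtx X Op ar) (H : LRep S w h) : LRep S (C.subst w) (applyC C h) := by
  rcases H with ⟨L, hL, rfl⟩
  refine ⟨L.map (fun e => ⟨e.a, C.comp e.c, e.s, e.w⟩), ?_, ?_⟩
  · intro e he
    rcases List.mem_map.mp he with ⟨e', he', rfl⟩
    refine ⟨(hL e' he').1, ?_⟩
    show (C.comp e'.c).subst e'.w < C.subst w
    rw [OCtx.subst_comp]
    exact hmon C _ _ (hL e' he').2
  · induction L with
    | nil => show applyC C 0 = 0
             rw [applyC_eq_lmap]; exact map_zero _
    | cons e L ih =>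
      rw [List.map_cons, sumE_cons, sumE_cons, applyC_add,
        ih (fun e he => hL e (List.mem_cons_of_mem _ he))]
      congr 1
      show applyC C (e.a • applyC e.c e.s) = Ent.term ⟨e.a, C.comp e.c, e.s, e.w⟩
      rw [applyC_smul, applyC_applyC, Ent.term]

lemma LRep.finsetSum
    {S : Set (OPoly X Op ar k)} {w : OW X Op ar} {ι : Type} (A : Finset ι)
    (β : ι → k) (C : ι → OCtx X Op ar) (σ : ι → OPoly X Op ar k) (W : ι → OW X Op ar)
    (h1 : ∀ x ∈ A, σ x ∈ S) (h2 : ∀ x ∈ A, IsLw (σ x) (W x))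
    (h3 : ∀ x ∈ A, (C x).subst (W x) < w) :
    LRep S w (∑ x ∈ A, β x • applyC (C x) (σ x)) := by
  classical
  induction A using Finset.induction_on with
  | empty => simpa using LRep.zero
  | insert a A' hx ih =>
    rw [Finset.sum_insert hx]
    refine LRep.add (LRep.single _ _ (h1 a (by simp)) (h2 a (by simp)) (h3 a (by simp))) ?_
    exact ih (fun x hx => h1 x (by simp [hx])) (fun x hx => h2 x (by simp [hx]))
      (fun x hx => h3 x (by simp [hx]))

lemma trivMod_iff_lRep {S : Set (OPoly X Op ar k)} (hS : ∀ s ∈ S, Monic s)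
    {w : OW X Op ar} {h : OPoly X Op ar k} : TrivMod S w h ↔ LRep S w h := by
  constructor
  · rintro ⟨n, α, c, s, hs, rfl, hlt⟩
    have hws : ∀ i : Fin n, ∃ ws, IsLw (s i) ws := fun i => by
      rcases hS (s i) (hs i) with ⟨ws, hws, -⟩; exact ⟨ws, hws⟩
    choose ws hwslw using hws
    refine ⟨List.ofFn (fun i => ⟨α i, c i, s i, ws i⟩), ?_, ?_⟩
    · intro e he
      rcases (List.mem_ofFn).mp he with ⟨i, rfl⟩
      exact ⟨⟨hs i, hwslw i⟩, hlt i _ (hwslw i)⟩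
    · rw [sumE, List.map_ofFn, List.sum_ofFn]
      rfl
  · rintro ⟨L, hL, rfl⟩
    refine ⟨L.length, fun i => (L.get i).a, fun i => (L.get i).c, fun i => (L.get i).s,
      fun i => (hL _ (L.get_mem _)).1.1, ?_, ?_⟩
    · conv_lhs => rw [← List.ofFn_get L]
      rw [sumE, List.map_ofFn, List.sum_ofFn]
      rfl
    · intro i ws' hws'
      have h1 := hL (L.get i) (L.get_mem _)
      have : ws' = (L.get i).w := hws'.unique h1.1.2
      rw [this]
      exact h1.2


lemma keyDiff
    (hmon : ∀ (c : OCtx X Op ar) (u v : OW X Op ar), u < v → c.subst u < c.subst v)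
    {S : Set (OPoly X Op ar k)} (hS : ∀ s ∈ S, Monic s) (hGSB : IsGSB S) :
    ∀ (c₁ c₂ : OCtx X Op ar) {s₁ s₂ : OPoly X Op ar k} {w₁ w₂ : OW X Op ar},
      s₁ ∈ S → s₂ ∈ S → IsLw s₁ w₁ → IsLw s₂ w₂ → c₁.subst w₁ = c₂.subst w₂ →
      LRep S (c₁.subst w₁) (applyC c₁ s₁ - applyC c₂ s₂) := by
  intro c₁
  induction c₁ with
  | hole =>
    intro c₂ s₁ s₂ w₁ w₂ hs₁ hs₂ h₁ h₂ heq
    have H := hGSB s₁ hs₁ s₂ hs₂ c₂ w₁ w₂ h₁ h₂ heq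
    rw [trivMod_iff_lRep hS] at H
    have happ : applyC OCtx.hole s₁ = s₁ := Finsupp.mapDomain_id
    show LRep S (OCtx.hole.subst w₁) (applyC OCtx.hole s₁ - applyC c₂ s₂)
    rw [happ]
    exact H
  | node f i d ts ih =>
    intro c₂ s₁ s₂ w₁ w₂ hs₁ hs₂ h₁ h₂ heq
    cases c₂ with
    | hole =>
      have heq' : (OCtx.node f i d ts).subst w₁ = w₂ := heq
      have H := hGSB s₂ hs₂ s₁ hs₁ (OCtx.node f i d ts) w₂ w₁ h₂ h₁ heq'.symm
      rw [trivMod_iff_lRep hS] at H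
      have H2 := H.neg
      rw [neg_sub] at H2
      have happ : applyC (OCtx.hole : OCtx X Op ar) s₂ = s₂ := Finsupp.mapDomain_id
      show LRep S ((OCtx.node f i d ts).subst w₁)
        (applyC (OCtx.node f i d ts) s₁ - applyC OCtx.hole s₂)
      rw [happ, heq']
      exact H2
    | node g j e ss =>
      have heq' := heq
      simp only [OCtx.subst] at heq'
      injection heq' with h1 h2
      subst h1
      have h2' := eq_of_heq h2
      by_cases hji : j = i
      · -- nested case
        subst hji
        have hde : d.subst w₁ = e.subst w₂ := by
          have := congrFun h2' j
          simpa using this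
        have hts : ∀ l, l ≠ j → ts l = ss l := by
          intro l hl
          have := congrFun h2' l
          simpa [Function.update_of_ne hl] using this
        have IH := ih e hs₁ hs₂ h₁ h₂ hde
        have L := LRep.lift hmon (OCtx.node f j OCtx.hole ts) IH
        rw [applyC_sub] at L
        have e1 : applyC (OCtx.node f j d ts) s₁
            = applyC (OCtx.node f j OCtx.hole ts) (applyC d s₁) := by
          rw [applyC_applyC]; rfl
        have e2 : applyC (OCtx.node f j e ss) s₂
            = applyC (OCtx.node f j OCtx.hole ts) (applyC e s₂) := by
          rw [applyC_applyC]
          unfold applyC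
          apply Finsupp.mapDomain_congr
          intro u _
          rw [OCtx.subst_comp]
          show OW.node f (Function.update ss j (e.subst u))
            = OW.node f (Function.update ts j (e.subst u))
          congr 1
          funext l
          by_cases hl : l = j
          · subst hl; simp
          · simp [Function.update_of_ne hl, hts l hl]
        rw [e1, e2]
        show LRep S ((OCtx.node f j OCtx.hole ts).subst (d.subst w₁)) _
        exact L
      · -- disjoint case
        have hij : i ≠ j := fun h => hji h.symm
        have hA : ss i = d.subst w₁ := by
          have := congrFun h2' i
          simpa [Function.update_of_ne hij] using this.symm
        have hB : ts j = e.subst w₂ := by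
          have := congrFun h2' j
          simpa [Function.update_of_ne hji] using this
        have hC : ∀ l, l ≠ i → l ≠ j → ts l = ss l := by
          intro l hli hlj
          have := congrFun h2' l
          simpa [Function.update_of_ne hli, Function.update_of_ne hlj] using this
        have hc₁ : s₁ w₁ = 1 := by
          rcases hS s₁ hs₁ with ⟨w', hw', hco⟩; rwa [hw'.unique h₁] at hco
        have hc₂ : s₂ w₂ = 1 := by
          rcases hS s₂ hs₂ with ⟨w', hw', hco⟩; rwa [hw'.unique h₂] at hco
        set D : OW X Op ar → OCtx X Op ar :=
          fun v => OCtx.node f i d (Function.update ts j (e.subst v)) with hD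
        set E : OW X Op ar → OCtx X Op ar :=
          fun u => OCtx.node f j e (Function.update ss i (d.subst u)) with hE
        have hDw₂ : applyC (D w₂) s₁ = applyC (OCtx.node f i d ts) s₁ := by
          have : Function.update ts j (e.subst w₂) = ts := by
            rw [← hB]; exact Function.update_eq_self _ _
          rw [hD]; simp only []; rw [this]
        have hEw₁ : applyC (E w₁) s₂ = applyC (OCtx.node f j e ss) s₂ := by
          have : Function.update ss i (d.subst w₁) = ss := by
            rw [← hA]; exact Function.update_eq_self _ _
          rw [hE]; simp only []; rw [this]
        have claimA : applyC (OCtx.node f i d ts) s₁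
            = (∑ v ∈ s₂.support, s₂ v • applyC (D v) s₁)
              - ∑ v ∈ s₂.support.erase w₂, s₂ v • applyC (D v) s₁ := by
          rw [eq_sub_iff_add_eq, ← Finset.add_sum_erase _ _ h₂.1]
          congr 1
          rw [hc₂, one_smul, hDw₂]
        have claimB : applyC (OCtx.node f j e ss) s₂
            = (∑ u ∈ s₁.support, s₁ u • applyC (E u) s₂)
              - ∑ u ∈ s₁.support.erase w₁, s₁ u • applyC (E u) s₂ := by
          rw [eq_sub_iff_add_eq, ← Finset.add_sum_erase _ _ h₁.1]
          congr 1
          rw [hc₁, one_smul, hEw₁]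
        have hword : ∀ u v, (D v).subst u = (E u).subst v := by
          intro u v
          show OW.node f (Function.update (Function.update ts j (e.subst v)) i (d.subst u))
             = OW.node f (Function.update (Function.update ss i (d.subst u)) j (e.subst v))
          congr 1
          funext l
          by_cases hli : l = i
          · subst hli
            rw [Function.update_self, Function.update_of_ne hij, Function.update_self]
          · by_cases hlj : l = j
            · subst hlj
              rw [Function.update_of_ne hji, Function.update_self, Function.update_self]
            · rw [Function.update_of_ne hli, Function.update_of_ne hlj,
                Function.update_of_ne hlj, Function.update_of_ne hli, hC l hli hlj]
        have claimC : (∑ v ∈ s₂.support, s₂ v • applyC (D v) s₁)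
            = ∑ u ∈ s₁.support, s₁ u • applyC (E u) s₂ := by
          have lhs1 : (∑ v ∈ s₂.support, s₂ v • applyC (D v) s₁)
              = ∑ v ∈ s₂.support, ∑ u ∈ s₁.support,
                  s₂ v • (s₁ u • Finsupp.single ((D v).subst u) (1 : k)) := by
            apply Finset.sum_congr rfl
            intro v _
            rw [applyC_eq_sum, Finset.smul_sum]
          have rhs1 : (∑ u ∈ s₁.support, s₁ u • applyC (E u) s₂)
              = ∑ u ∈ s₁.support, ∑ v ∈ s₂.support,
                  s₁ u • (s₂ v • Finsupp.single ((E u).subst v) (1 : k)) := by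
            apply Finset.sum_congr rfl
            intro u _
            rw [applyC_eq_sum, Finset.smul_sum]
          rw [lhs1, rhs1, Finset.sum_comm]
          apply Finset.sum_congr rfl
          intro u _
          apply Finset.sum_congr rfl
          intro v _
          rw [hword u v, smul_comm]
        have hid : applyC (OCtx.node f i d ts) s₁ - applyC (OCtx.node f j e ss) s₂
            = (∑ u ∈ s₁.support.erase w₁, s₁ u • applyC (E u) s₂)
              - ∑ v ∈ s₂.support.erase w₂, s₂ v • applyC (D v) s₁ := by
          rw [claimA, claimB, claimC]; abel
        have hEbound : ∀ u ∈ s₁.support.erase w₁,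
            (E u).subst w₂ < (OCtx.node f i d ts).subst w₁ := by
          intro u hu
          have hu1 : u < w₁ := lt_of_le_of_ne
            (h₁.2 u (Finset.mem_of_mem_erase hu)) (Finset.ne_of_mem_erase hu)
          set C'' : OCtx X Op ar :=
            OCtx.node f i OCtx.hole (Function.update ss j (e.subst w₂)) with hC''
          have e1 : (E u).subst w₂ = C''.subst (d.subst u) := by
            show OW.node f (Function.update (Function.update ss i (d.subst u)) j (e.subst w₂))
               = OW.node f (Function.update (Function.update ss j (e.subst w₂)) i (d.subst u))
            congr 1
            exact Function.update_comm hij _ _ _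
          have e2 : C''.subst (d.subst w₁) = (OCtx.node f i d ts).subst w₁ := by
            show OW.node f (Function.update (Function.update ss j (e.subst w₂)) i (d.subst w₁))
               = OW.node f (Function.update ts i (d.subst w₁))
            congr 1
            funext l
            by_cases hli : l = i
            · subst hli; rw [Function.update_self, Function.update_self]
            · by_cases hlj : l = j
              · subst hlj
                rw [Function.update_of_ne hji, Function.update_self,
                  Function.update_of_ne hji, hB]
              · rw [Function.update_of_ne hli, Function.update_of_ne hlj,
                  Function.update_of_ne hli, hC l hli hlj]
          rw [e1, ← e2]
          exact hmon C'' _ _ (hmon d _ _ hu1)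
        have hDbound : ∀ v ∈ s₂.support.erase w₂,
            (D v).subst w₁ < (OCtx.node f i d ts).subst w₁ := by
          intro v hv
          have hv1 : v < w₂ := lt_of_le_of_ne
            (h₂.2 v (Finset.mem_of_mem_erase hv)) (Finset.ne_of_mem_erase hv)
          set C' : OCtx X Op ar :=
            OCtx.node f j OCtx.hole (Function.update ts i (d.subst w₁)) with hC'
          have e1 : (D v).subst w₁ = C'.subst (e.subst v) := by
            show OW.node f (Function.update (Function.update ts j (e.subst v)) i (d.subst w₁))
               = OW.node f (Function.update (Function.update ts i (d.subst w₁)) j (e.subst v))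
            congr 1
            exact Function.update_comm hji _ _ _
          have e2 : C'.subst (e.subst w₂) = (OCtx.node f i d ts).subst w₁ := by
            show OW.node f (Function.update (Function.update ts i (d.subst w₁)) j (e.subst w₂))
               = OW.node f (Function.update ts i (d.subst w₁))
            congr 1
            funext l
            by_cases hlj : l = j
            · subst hlj
              rw [Function.update_self, Function.update_of_ne hji, hB]
            · rw [Function.update_of_ne hlj]
          rw [e1, ← e2]
          exact hmon C' _ _ (hmon e _ _ hv1)
        rw [hid, sub_eq_add_neg]
        refine LRep.add ?_ (LRep.neg ?_)
        · exact LRep.finsetSum _ (fun u => s₁ u) E (fun _ => s₂) (fun _ => w₂)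
            (fun u _ => hs₂) (fun u _ => h₂) hEbound
        · exact LRep.finsetSum _ (fun v => s₂ v) D (fun _ => s₁) (fun _ => w₁)
            (fun v _ => hs₁) (fun v _ => h₁) hDbound


lemma exists_list_max {α : Type} [LinearOrder α] :
    ∀ (l : List α), l ≠ [] → ∃ m ∈ l, ∀ x ∈ l, x ≤ m := by
  intro l
  induction l with
  | nil => intro h; exact absurd rfl h
  | cons a l ih =>
    intro _
    by_cases hl : l = []
    · subst hl
      exact ⟨a, List.mem_singleton_self a, by simp⟩
    · rcases ih hl with ⟨m, hm, hmax⟩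
      rcases le_total a m with h | h
      · exact ⟨m, List.mem_cons_of_mem _ hm, by
          intro x hx
          rcases List.mem_cons.mp hx with rfl | hx
          · exact h
          · exact hmax x hx⟩
      · exact ⟨a, List.mem_cons_self, by
          intro x hx
          rcases List.mem_cons.mp hx with rfl | hx
          · exact le_rfl
          · exact le_trans (hmax x hx) h⟩

lemma partitionE (w' : OW X Op ar) :
    ∀ L : List (Ent X Op ar k), ∃ T R : List (Ent X Op ar k),
      (∀ e ∈ T, e ∈ L ∧ e.wrd = w') ∧ (∀ e ∈ R, e ∈ L ∧ e.wrd ≠ w') ∧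
      sumE L = sumE T + sumE R := by
  intro L
  classical
  induction L with
  | nil => exact ⟨[], [], by simp, by simp, by simp⟩
  | cons a L ih =>
    rcases ih with ⟨T, R, hT, hR, hsum⟩
    by_cases ha : a.wrd = w'
    · refine ⟨a :: T, R, ?_, ?_, ?_⟩
      · intro e he
        rcases List.mem_cons.mp he with rfl | he
        · exact ⟨List.mem_cons_self, ha⟩
        · exact ⟨List.mem_cons_of_mem _ (hT e he).1, (hT e he).2⟩
      · exact fun e he => ⟨List.mem_cons_of_mem _ (hR e he).1, (hR e he).2⟩
      · rw [sumE_cons, sumE_cons, hsum, add_assoc]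
    · refine ⟨T, a :: R, ?_, ?_, ?_⟩
      · exact fun e he => ⟨List.mem_cons_of_mem _ (hT e he).1, (hT e he).2⟩
      · intro e he
        rcases List.mem_cons.mp he with rfl | he
        · exact ⟨List.mem_cons_self, ha⟩
        · exact ⟨List.mem_cons_of_mem _ (hR e he).1, (hR e he).2⟩
      · rw [sumE_cons, sumE_cons, hsum]
        abel

lemma keyMain
    (hmon : ∀ (c : OCtx X Op ar) (u v : OW X Op ar), u < v → c.subst u < c.subst v)
    [WellFoundedLT (OW X Op ar)]
    {S : Set (OPoly X Op ar k)} (hS : ∀ s ∈ S, Monic s) (hGSB : IsGSB S) :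
    ∀ w : OW X Op ar, ∀ n : ℕ, ∀ (f : OPoly X Op ar k) (T R : List (Ent X Op ar k)),
      T.length ≤ n → (∀ e ∈ T, e.Ok S ∧ e.wrd = w) → (∀ e ∈ R, e.Ok S ∧ e.wrd < w) →
      f = sumE T + sumE R → f ≠ 0 →
      ∃ (c : OCtx X Op ar) (s : OPoly X Op ar k) (ws : OW X Op ar),
        s ∈ S ∧ IsLw s ws ∧ IsLw f (c.subst ws) := by
  intro w
  refine WellFounded.induction (C := fun w => ∀ (n : ℕ) (f : OPoly X Op ar k)
    (T R : List (Ent X Op ar k)), T.length ≤ n → (∀ e ∈ T, e.Ok S ∧ e.wrd = w) →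
    (∀ e ∈ R, e.Ok S ∧ e.wrd < w) → f = sumE T + sumE R → f ≠ 0 →
    ∃ (c : OCtx X Op ar) (s : OPoly X Op ar k) (ws : OW X Op ar),
      s ∈ S ∧ IsLw s ws ∧ IsLw f (c.subst ws)) wellFounded_lt w ?_
  clear w
  intro w IHw n
  induction n with
  | zero =>
    intro f T R hlen hT hR hf hf0
    have hTnil : T = [] := List.eq_nil_of_length_eq_zero (Nat.le_zero.mp hlen)
    subst hTnil
    rw [sumE_nil, zero_add] at hf
    have hRne : R ≠ [] := by
      intro h; rw [h] at hf; exact hf0 (by simpa using hf)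
    have hmapne : R.map Ent.wrd ≠ [] := by
      simpa using hRne
    rcases exists_list_max _ hmapne with ⟨m, hm, hmax⟩
    rcases List.mem_map.mp hm with ⟨e₀, he₀, rfl⟩
    have hmw : e₀.wrd < w := (hR e₀ he₀).2
    rcases partitionE e₀.wrd R with ⟨T', R', hT', hR', hsum⟩
    refine IHw e₀.wrd hmw T'.length f T' R' le_rfl ?_ ?_ (by rw [hf, hsum]) hf0
    · exact fun e he => ⟨(hR e (hT' e he).1).1, (hT' e he).2⟩
    · intro e he
      refine ⟨(hR e (hR' e he).1).1, ?_⟩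
      have h1 : e.wrd ≤ e₀.wrd := hmax _ (List.mem_map_of_mem (hR' e he).1)
      exact lt_of_le_of_ne h1 (hR' e he).2
  | succ n IHn =>
    intro f T R hlen hT hR hf hf0
    match T with
    | [] => exact IHn f [] R (Nat.zero_le n) (by simp) hR hf hf0
    | [e₁] =>
      by_cases he : e₁.a = 0
      · refine IHn f [] R (Nat.zero_le n) (by simp) hR ?_ hf0
        rw [hf]
        simp [Ent.term, he]
      · have hOk := (hT e₁ (List.mem_cons_self)).1
        have hwrd : e₁.wrd = w := (hT e₁ (List.mem_cons_self)).2
        refine ⟨e₁.c, e₁.s, e₁.w, hOk.1, hOk.2, ?_⟩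
        have hc1 : e₁.s e₁.w ≠ 0 := Finsupp.mem_support_iff.mp hOk.2.1
        have hRz : sumE R (e₁.c.subst e₁.w) = 0 := by
          by_contra hne
          rcases sumE_apply_ne hne with ⟨e, he', hv⟩
          have := term_apply_le hmon (hR e he').1.2 hv
          have h2 : e.wrd < w := (hR e he').2
          rw [show e₁.c.subst e₁.w = e₁.wrd from rfl, hwrd] at this
          exact absurd (lt_of_le_of_lt this h2) (lt_irrefl w)
        constructor
        · rw [Finsupp.mem_support_iff]
          have hfe : f (e₁.c.subst e₁.w) = e₁.a * e₁.s e₁.w := by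
            rw [hf, sumE_cons, sumE_nil, add_zero, Finsupp.add_apply, hRz, add_zero,
              Ent.term, Finsupp.smul_apply, applyC_apply hmon, smul_eq_mul]
          rw [hfe]
          exact mul_ne_zero he hc1
        · intro v hv
          have hfv : f v ≠ 0 := Finsupp.mem_support_iff.mp hv
          rw [hf, sumE_cons, sumE_nil, add_zero] at hfv
          rw [Finsupp.add_apply] at hfv
          by_cases h1 : e₁.term v = 0
          · rw [h1, zero_add] at hfv
            rcases sumE_apply_ne hfv with ⟨e, he', hv'⟩
            have h3 : v < w := lt_of_le_of_lt (term_apply_le hmon (hR e he').1.2 hv')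
              (hR e he').2
            show v ≤ e₁.c.subst e₁.w
            rw [show e₁.c.subst e₁.w = e₁.wrd from rfl, hwrd]
            exact h3.le
          · exact term_apply_le hmon hOk.2 h1
    | e₁ :: e₂ :: T₂ =>
      have hOk₁ := (hT e₁ (List.mem_cons_self)).1
      have hw₁ : e₁.wrd = w := (hT e₁ (List.mem_cons_self)).2
      have hOk₂ := (hT e₂ (List.mem_cons_of_mem _ (List.mem_cons_self))).1
      have hw₂ : e₂.wrd = w := (hT e₂ (List.mem_cons_of_mem _ (List.mem_cons_self))).2
      have heq : e₁.c.subst e₁.w = e₂.c.subst e₂.w := by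
        show e₁.wrd = e₂.wrd
        rw [hw₁, hw₂]
      have H := keyDiff hmon hS hGSB e₁.c e₂.c hOk₁.1 hOk₂.1 hOk₁.2 hOk₂.2 heq
      have H2 : LRep S w (e₁.a • (applyC e₁.c e₁.s - applyC e₂.c e₂.s)) := by
        have := (H.smul e₁.a)
        rwa [show e₁.c.subst e₁.w = w from hw₁] at this
      rcases H2 with ⟨L₀, hL₀, hL₀eq⟩
      set e₂' : Ent X Op ar k := ⟨e₁.a + e₂.a, e₂.c, e₂.s, e₂.w⟩ with he₂'
      refine IHn f (e₂' :: T₂) (L₀ ++ R) ?_ ?_ ?_ ?_ hf0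
      · have : T₂.length + 2 ≤ n + 1 := by simpa using hlen
        simpa using Nat.lt_succ_iff.mp (Nat.lt_of_lt_of_le (Nat.lt_succ_self _)
          (le_trans (Nat.le_refl _) this))
      · intro e he
        rcases List.mem_cons.mp he with rfl | he
        · exact ⟨⟨hOk₂.1, hOk₂.2⟩, hw₂⟩
        · exact hT e (List.mem_cons_of_mem _ (List.mem_cons_of_mem _ he))
      · intro e he
        rcases List.mem_append.mp he with he | he
        · exact hL₀ e he
        · exact hR e he
      · rw [hf, sumE_cons, sumE_cons, sumE_cons, sumE_append, ← hL₀eq]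
        show e₁.term + (e₂.term + sumE T₂) + sumE R
          = e₂'.term + sumE T₂ + (e₁.a • (applyC e₁.c e₁.s - applyC e₂.c e₂.s) + sumE R)
        rw [Ent.term, Ent.term, he₂']
        show e₁.a • applyC e₁.c e₁.s + (e₂.a • applyC e₂.c e₂.s + sumE T₂) + sumE R
          = (e₁.a + e₂.a) • applyC e₂.c e₂.s + sumE T₂
            + (e₁.a • (applyC e₁.c e₁.s - applyC e₂.c e₂.s) + sumE R)
        rw [smul_sub, add_smul]
        abel


/-- v is reducible: it contains a leading word of an element of S. -/
def Red (S : Set (OPoly X Op ar k)) (v : OW X Op ar) : Prop :=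
  ∃ (c : OCtx X Op ar) (s : OPoly X Op ar k) (ws : OW X Op ar),
    s ∈ S ∧ IsLw s ws ∧ v = c.subst ws

lemma divisionLemma
    (hmon : ∀ (c : OCtx X Op ar) (u v : OW X Op ar), u < v → c.subst u < c.subst v)
    [WellFoundedLT (OW X Op ar)]
    {S : Set (OPoly X Op ar k)} (hS : ∀ s ∈ S, Monic s) :
    ∀ w : OW X Op ar, ∀ f : OPoly X Op ar k, (∀ v ∈ f.support, v ≤ w) →
    ∃ (L : List (Ent X Op ar k)) (r : OPoly X Op ar k),
      (∀ e ∈ L, e.Ok S ∧ e.wrd ≤ w) ∧ f = sumE L + r ∧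
      (∀ v ∈ r.support, v ≤ w ∧ ¬ Red S v) := by
  intro w
  refine WellFounded.induction (C := fun w => ∀ f : OPoly X Op ar k,
    (∀ v ∈ f.support, v ≤ w) →
    ∃ (L : List (Ent X Op ar k)) (r : OPoly X Op ar k),
      (∀ e ∈ L, e.Ok S ∧ e.wrd ≤ w) ∧ f = sumE L + r ∧
      (∀ v ∈ r.support, v ≤ w ∧ ¬ Red S v)) wellFounded_lt w ?_
  clear w
  intro w IH f hf
  classical
  by_cases hf0 : f = 0
  · exact ⟨[], 0, by simp, by simp [hf0], by simp⟩
  have hne : f.support.Nonempty := Finsupp.support_nonempty_iff.mpr hf0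
  set u := f.support.max' hne with hu
  have humem : u ∈ f.support := f.support.max'_mem hne
  have hmax : ∀ v ∈ f.support, v ≤ u := fun v hv => Finset.le_max' _ v hv
  have huw : u ≤ w := hf u humem
  by_cases hred : Red S u
  · rcases hred with ⟨c, s, ws, hs, hlw, hueq⟩
    have hcs : s ws = 1 := by
      rcases hS s hs with ⟨w', hw', hc⟩; rwa [hw'.unique hlw] at hc
    have happ : (applyC c s) u = 1 := by
      rw [hueq, applyC_apply hmon, hcs]
    set g := f - (f u) • applyC c s with hg
    have hgu : g u = 0 := by
      rw [hg, Finsupp.sub_apply, Finsupp.smul_apply, happ, smul_eq_mul, mul_one, sub_self]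
    have hgsupp : ∀ v ∈ g.support, v < u := by
      intro v hv
      have hvne : g v ≠ 0 := Finsupp.mem_support_iff.mp hv
      have hvu : v ≠ u := fun h => hvne (h ▸ hgu)
      refine lt_of_le_of_ne ?_ hvu
      rw [hg, Finsupp.sub_apply] at hvne
      by_cases h1 : f v = 0
      · have h2 : (applyC c s) v ≠ 0 := by
          intro h3
          rw [h1, Finsupp.smul_apply, h3, smul_zero, sub_zero] at hvne
          exact hvne rfl
        rcases supp_applyC (Finsupp.mem_support_iff.mpr h2) with ⟨u', hu', rfl⟩
        rw [hueq]
        exact subst_le hmon c (hlw.2 u' hu')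
      · exact hmax v (Finsupp.mem_support_iff.mpr h1)
    by_cases hg0 : g = 0
    · refine ⟨[⟨f u, c, s, ws⟩], 0, ?_, ?_, by simp⟩
      · intro e he
        rcases List.mem_singleton.mp he with rfl
        refine ⟨⟨hs, hlw⟩, ?_⟩
        show c.subst ws ≤ w
        rw [← hueq]; exact huw
      · have hfs : f = (f u) • applyC c s := by
          have h4 : f - (f u) • applyC c s = 0 := hg ▸ hg0
          exact sub_eq_zero.mp h4
        rw [add_zero, sumE_cons, sumE_nil, add_zero]
        exact hfs
    · have hgne : g.support.Nonempty := Finsupp.support_nonempty_iff.mpr hg0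
      set u' := g.support.max' hgne with hu'
      have hu'lt : u' < u := hgsupp _ (g.support.max'_mem hgne)
      rcases IH u' (lt_of_lt_of_le hu'lt huw) g
        (fun v hv => Finset.le_max' _ v hv) with ⟨L, r, hL, hgr, hr⟩
      refine ⟨⟨f u, c, s, ws⟩ :: L, r, ?_, ?_, ?_⟩
      · intro e he
        rcases List.mem_cons.mp he with rfl | he
        · refine ⟨⟨hs, hlw⟩, ?_⟩
          show c.subst ws ≤ w
          rw [← hueq]; exact huw
        · exact ⟨(hL e he).1, le_trans (hL e he).2 (le_trans hu'lt.le huw)⟩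
      · rw [sumE_cons]
        show f = (f u) • applyC c s + sumE L + r
        have h5 : f - (f u) • applyC c s = sumE L + r := hg ▸ hgr
        rw [sub_eq_iff_eq_add] at h5
        exact h5.trans (by abel)
      · exact fun v hv => ⟨le_trans (hr v hv).1 (le_trans hu'lt.le huw), (hr v hv).2⟩
  · set g := f - Finsupp.single u (f u) with hg
    have hgu : g u = 0 := by
      rw [hg, Finsupp.sub_apply, Finsupp.single_eq_same, sub_self]
    have hgsupp : ∀ v ∈ g.support, v < u := by
      intro v hv
      have hvne : g v ≠ 0 := Finsupp.mem_support_iff.mp hv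
      have hvu : v ≠ u := fun h => hvne (h ▸ hgu)
      refine lt_of_le_of_ne ?_ hvu
      rw [hg, Finsupp.sub_apply, Finsupp.single_eq_of_ne hvu, sub_zero] at hvne
      exact hmax v (Finsupp.mem_support_iff.mpr hvne)
    by_cases hg0 : g = 0
    · refine ⟨[], f, by simp, by simp, ?_⟩
      intro v hv
      have hfs : f = Finsupp.single u (f u) := by
        have h4 : f - Finsupp.single u (f u) = 0 := hg ▸ hg0
        exact sub_eq_zero.mp h4
      rw [hfs] at hv
      have hvu : v = u := by
        have := Finsupp.support_single_subset hv
        simpa using this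
      subst hvu
      exact ⟨huw, hred⟩
    · have hgne : g.support.Nonempty := Finsupp.support_nonempty_iff.mpr hg0
      set u' := g.support.max' hgne with hu'
      have hu'lt : u' < u := hgsupp _ (g.support.max'_mem hgne)
      rcases IH u' (lt_of_lt_of_le hu'lt huw) g
        (fun v hv => Finset.le_max' _ v hv) with ⟨L, r, hL, hgr, hr⟩
      refine ⟨L, r + Finsupp.single u (f u), ?_, ?_, ?_⟩
      · exact fun e he => ⟨(hL e he).1, le_trans (hL e he).2 (le_trans hu'lt.le huw)⟩
      · have h5 : f - Finsupp.single u (f u) = sumE L + r := hg ▸ hgr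
        rw [sub_eq_iff_eq_add] at h5
        exact h5.trans (by abel)
      · intro v hv
        have := Finsupp.support_add hv
        rcases Finset.mem_union.mp this with hv1 | hv1
        · exact ⟨le_trans (hr v hv1).1 (le_trans hu'lt.le huw), (hr v hv1).2⟩
        · have hvu : v = u := by
            have := Finsupp.support_single_subset hv1
            simpa using this
          subst hvu
          exact ⟨huw, hred⟩


lemma sumE_mem_IdS {S : Set (OPoly X Op ar k)} {L : List (Ent X Op ar k)}
    (hL : ∀ e ∈ L, e.s ∈ S) : sumE L ∈ IdS S := by
  induction L with
  | nil => exact zero_mem _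
  | cons e L ih =>
    rw [sumE_cons]
    refine add_mem ?_ (ih (fun e' he' => hL e' (List.mem_cons_of_mem _ he')))
    exact Submodule.smul_mem _ _ (Submodule.subset_span
      ⟨e.c, e.s, hL e (List.mem_cons_self), rfl⟩)

lemma mem_IdS_list {S : Set (OPoly X Op ar k)} (hS : ∀ s ∈ S, Monic s)
    {f : OPoly X Op ar k} (hf : f ∈ IdS S) :
    ∃ L : List (Ent X Op ar k), (∀ e ∈ L, e.Ok S) ∧ f = sumE L := by
  rw [IdS] at hf
  rcases Submodule.mem_span_set'.mp hf with ⟨n, a, gfun, hsum⟩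
  have hch : ∀ i : Fin n, ∃ (c : OCtx X Op ar) (s : OPoly X Op ar k) (ws : OW X Op ar),
      s ∈ S ∧ IsLw s ws ∧ (gfun i : OPoly X Op ar k) = applyC c s := by
    intro i
    rcases (gfun i).2 with ⟨c, s, hs, he⟩
    rcases hS s hs with ⟨ws, hws, -⟩
    exact ⟨c, s, ws, hs, hws, he⟩
  choose c s ws hs hws hgeq using hch
  refine ⟨List.ofFn (fun i => ⟨a i, c i, s i, ws i⟩), ?_, ?_⟩
  · intro e he
    rcases (List.mem_ofFn).mp he with ⟨i, rfl⟩
    exact ⟨hs i, hws i⟩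
  · rw [sumE, List.map_ofFn, List.sum_ofFn, ← hsum]
    apply Finset.sum_congr rfl
    intro i _
    show a i • (gfun i : OPoly X Op ar k) = Ent.term ⟨a i, c i, s i, ws i⟩
    rw [hgeq i]
    rfl

lemma condII_of_gsb
    (hmon : ∀ (c : OCtx X Op ar) (u v : OW X Op ar), u < v → c.subst u < c.subst v)
    [WellFoundedLT (OW X Op ar)]
    {S : Set (OPoly X Op ar k)} (hS : ∀ s ∈ S, Monic s) (hGSB : IsGSB S) :
    ∀ f ∈ IdS S, f ≠ 0 → ∀ w, IsLw f w → Red S w := by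
  intro f hfI hf0 w hw
  rcases mem_IdS_list hS hfI with ⟨L, hL, hfeq⟩
  have hLne : L ≠ [] := by
    intro h; exact hf0 (by rw [hfeq, h, sumE_nil])
  rcases exists_list_max (L.map Ent.wrd) (by simpa using hLne) with ⟨m, hm, hmax⟩
  rcases List.mem_map.mp hm with ⟨e₀, he₀, rfl⟩
  rcases partitionE e₀.wrd L with ⟨T, R, hT, hR, hsum⟩
  rcases keyMain hmon hS hGSB e₀.wrd T.length f T R le_rfl
    (fun e he => ⟨hL _ (hT e he).1, (hT e he).2⟩)
    (fun e he => ⟨hL _ (hR e he).1, lt_of_le_of_ne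
      (hmax _ (List.mem_map_of_mem (hR e he).1)) (hR e he).2⟩)
    (hfeq.trans hsum) hf0 with ⟨c, s, ws, hs, hlw, hflw⟩
  exact ⟨c, s, ws, hs, hlw, hw.unique hflw⟩

lemma span_irr
    (hmon : ∀ (c : OCtx X Op ar) (u v : OW X Op ar), u < v → c.subst u < c.subst v)
    [WellFoundedLT (OW X Op ar)]
    {S : Set (OPoly X Op ar k)} (hS : ∀ s ∈ S, Monic s) (f : OPoly X Op ar k) :
    Submodule.Quotient.mk (p := IdS S) f ∈ Submodule.span k (Set.range
      (fun w : {w : OW X Op ar // ¬ Red S w} =>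
        Submodule.Quotient.mk (p := IdS S) (Finsupp.single w.1 (1 : k)))) := by
  by_cases hf0 : f = 0
  · rw [hf0]
    exact zero_mem _
  have hne : f.support.Nonempty := Finsupp.support_nonempty_iff.mpr hf0
  rcases divisionLemma hmon hS (f.support.max' hne) f
    (fun v hv => Finset.le_max' _ v hv) with ⟨L, r, hL, hfr, hr⟩
  have hmk : Submodule.Quotient.mk (p := IdS S) f
      = Submodule.Quotient.mk (p := IdS S) r := by
    rw [Submodule.Quotient.eq]
    have : f - r = sumE L := by rw [hfr]; abel
    rw [this]
    exact sumE_mem_IdS (fun e he => (hL e he).1.1)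
  rw [hmk]
  have hrs : r = ∑ v ∈ r.support, Finsupp.single v (r v) := by
    conv_lhs => rw [← Finsupp.sum_single r]
    rfl
  rw [hrs]
  have : Submodule.Quotient.mk (p := IdS S) (∑ v ∈ r.support, Finsupp.single v (r v))
      = ∑ v ∈ r.support, (r v) • Submodule.Quotient.mk (p := IdS S)
          (Finsupp.single v (1 : k)) := by
    rw [show (Submodule.Quotient.mk (p := IdS S) : OPoly X Op ar k → _)
      = ⇑(Submodule.mkQ (IdS S)) from rfl, map_sum]
    apply Finset.sum_congr rfl
    intro v _
    rw [show Finsupp.single v (r v) = (r v) • Finsupp.single v (1 : k) by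
      rw [Finsupp.smul_single, smul_eq_mul, mul_one], map_smul]
  rw [this]
  apply Submodule.sum_mem
  intro v hv
  exact Submodule.smul_mem _ _ (Submodule.subset_span ⟨⟨v, (hr v hv).2⟩, rfl⟩)

lemma li_of_condII {S : Set (OPoly X Op ar k)}
    (hII : ∀ f ∈ IdS S, f ≠ 0 → ∀ w, IsLw f w → Red S w) :
    LinearIndependent k (fun w : {w : OW X Op ar // ¬ Red S w} =>
      Submodule.Quotient.mk (p := IdS S) (Finsupp.single w.1 (1 : k))) := by
  rw [linearIndependent_iff']
  intro t g hsum i hi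
  classical
  set h : OPoly X Op ar k := ∑ j ∈ t, Finsupp.single (j : {w : OW X Op ar // ¬ Red S w}).1 (g j)
    with hh
  have hmk : Submodule.mkQ (IdS S) h = 0 := by
    rw [hh, map_sum, ← hsum]
    apply Finset.sum_congr rfl
    intro j _
    rw [show Finsupp.single j.1 (g j) = (g j) • Finsupp.single j.1 (1 : k) by
      rw [Finsupp.smul_single, smul_eq_mul, mul_one], map_smul]
    rfl
  have hmem : h ∈ IdS S := (Submodule.Quotient.mk_eq_zero _).mp hmk
  have h0 : h = 0 := by
    by_contra hne
    rcases exists_isLw hne with ⟨w, hw⟩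
    have hred := hII h hmem hne w hw
    have hws : w ∈ h.support := hw.1
    rw [hh] at hws
    have := Finsupp.support_finset_sum hws
    rcases Finset.mem_biUnion.mp this with ⟨j, _, hj⟩
    have hwj : w = j.1 := by
      have := Finsupp.support_single_subset hj
      simpa using this
    exact j.2 (hwj ▸ hred)
  have h1 : h i.1 = 0 := by rw [h0]; rfl
  rw [hh, Finset.sum_apply'] at h1
  rw [Finset.sum_eq_single_of_mem i hi] at h1
  · rwa [Finsupp.single_eq_same] at h1
  · intro j _ hji
    apply Finsupp.single_eq_of_ne
    intro hc
    exact hji (Subtype.ext hc.symm)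

lemma gsb_of_li
    (hmon : ∀ (c : OCtx X Op ar) (u v : OW X Op ar), u < v → c.subst u < c.subst v)
    [WellFoundedLT (OW X Op ar)]
    {S : Set (OPoly X Op ar k)} (hS : ∀ s ∈ S, Monic s)
    (hLI : LinearIndependent k (fun w : {w : OW X Op ar // ¬ Red S w} =>
      Submodule.Quotient.mk (p := IdS S) (Finsupp.single w.1 (1 : k)))) :
    IsGSB S := by
  intro f hf g hg c wf wg hlwf hlwg hw
  classical
  set h := f - applyC c g with hhdef
  have hmem : h ∈ IdS S := by
    refine sub_mem ?_ ?_
    · exact Submodule.subset_span ⟨OCtx.hole, f, hf, (Finsupp.mapDomain_id).symm⟩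
    · exact Submodule.subset_span ⟨c, g, hg, rfl⟩
  have hcf : f wf = 1 := by
    rcases hS f hf with ⟨w', hw', hc⟩; rwa [hw'.unique hlwf] at hc
  have hcg : g wg = 1 := by
    rcases hS g hg with ⟨w', hw', hc⟩; rwa [hw'.unique hlwg] at hc
  have happ : (applyC c g) wf = 1 := by
    rw [hw, applyC_apply hmon, hcg]
  have hhwf : h wf = 0 := by
    rw [hhdef, Finsupp.sub_apply, hcf, happ, sub_self]
  have hsupp : ∀ v ∈ h.support, v < wf := by
    intro v hv
    have hvne : h v ≠ 0 := Finsupp.mem_support_iff.mp hv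
    have hvwf : v ≠ wf := fun hq => hvne (hq ▸ hhwf)
    refine lt_of_le_of_ne ?_ hvwf
    rw [hhdef, Finsupp.sub_apply] at hvne
    by_cases h1 : f v = 0
    · have h2 : (applyC c g) v ≠ 0 := by
        intro h3; rw [h1, h3, sub_zero] at hvne; exact hvne rfl
      rcases supp_applyC (Finsupp.mem_support_iff.mpr h2) with ⟨u', hu', rfl⟩
      rw [hw]
      exact subst_le hmon c (hlwg.2 u' hu')
    · exact hlwf.2 v (Finsupp.mem_support_iff.mpr h1)
  rw [trivMod_iff_lRep hS]
  by_cases h0 : h = 0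
  · exact h0 ▸ LRep.zero
  have hne : h.support.Nonempty := Finsupp.support_nonempty_iff.mpr h0
  set u := h.support.max' hne with hu
  have huwf : u < wf := hsupp _ (h.support.max'_mem hne)
  rcases divisionLemma hmon hS u h (fun v hv => Finset.le_max' _ v hv) with ⟨L, r, hL, hhr, hr⟩
  have hrI : r ∈ IdS S := by
    have h4 : h - sumE L ∈ IdS S :=
      sub_mem hmem (sumE_mem_IdS (fun e he => (hL e he).1.1))
    have h5 : h - sumE L = r := by rw [hhr]; abel
    rwa [h5] at h4
  have hr0 : r = 0 := by
    by_contra hrne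
    rw [linearIndependent_iff'] at hLI
    set emb : {v // v ∈ r.support} ↪ {w : OW X Op ar // ¬ Red S w} :=
      ⟨fun v => ⟨v.1, (hr v.1 v.2).2⟩, by
        intro a b hab
        simp only [Subtype.mk.injEq] at hab
        exact Subtype.ext hab⟩ with hemb
    set t : Finset {w : OW X Op ar // ¬ Red S w} := r.support.attach.map emb with ht
    have hsum0 : ∑ j ∈ t, (r j.1) • Submodule.Quotient.mk (p := IdS S)
        (Finsupp.single j.1 (1 : k)) = 0 := by
      rw [ht, Finset.sum_map]
      have hstep : ∀ v ∈ r.support.attach,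
          (r (emb v).1) • Submodule.Quotient.mk (p := IdS S)
            (Finsupp.single (emb v).1 (1 : k))
          = Submodule.mkQ (IdS S) (Finsupp.single v.1 (r v.1)) := by
        intro v _
        rw [show Finsupp.single (v.1 : OW X Op ar) (r v.1)
          = (r v.1) • Finsupp.single v.1 (1 : k) by
            rw [Finsupp.smul_single, smul_eq_mul, mul_one], map_smul]
        rfl
      rw [Finset.sum_congr rfl hstep, ← map_sum]
      have : ∑ v ∈ r.support.attach, Finsupp.single v.1 (r v.1) = r := by
        rw [Finset.sum_attach r.support (fun v => Finsupp.single v (r v))]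
        exact Finsupp.sum_single r
      rw [this]
      exact (Submodule.Quotient.mk_eq_zero _).mpr hrI
    rcases Finsupp.support_nonempty_iff.mpr hrne with ⟨v, hv⟩
    have hvt : (⟨v, (hr v hv).2⟩ : {w : OW X Op ar // ¬ Red S w}) ∈ t := by
      rw [ht, Finset.mem_map]
      exact ⟨⟨v, hv⟩, Finset.mem_attach _ _, rfl⟩
    have := hLI t (fun j => r j.1) hsum0 _ hvt
    exact (Finsupp.mem_support_iff.mp hv) this
  refine ⟨L, ?_, ?_⟩
  · exact fun e he => ⟨(hL e he).1, lt_of_le_of_lt (hL e he).2 huwf⟩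
  · rw [hhr, hr0, add_zero]

end CD
/-- Composition-Diamond lemma for Ω-algebras. For a set S of monic
Ω-polynomials and a monomial well-ordering, the following are equivalent:
(I) S is a Gröbner–Shirshov basis;
(II) the leading word of any nonzero f ∈ Id(S) contains the leading word of some
     s ∈ S as a subword;
(III) Irr(S), the set of Ω-words containing no leading word of an element of S as
     a subword, is a k-basis of k(X,Ω)/Id(S). -/
theorem composition_diamond_omega (X Op : Type) (ar : Op → ℕ) (har : ∀ f, 1 ≤ ar f)
    (k : Type) [Field k] [LinearOrder (OW X Op ar)] [WellFoundedLT (OW X Op ar)]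
    (hmon : ∀ (c : OCtx X Op ar) (u v : OW X Op ar), u < v → c.subst u < c.subst v)
    (S : Set (OPoly X Op ar k)) (hS : ∀ s ∈ S, Monic s) :
    (IsGSB S ↔
      (∀ f ∈ IdS S, f ≠ 0 → ∀ w, IsLw f w →
        ∃ (c : OCtx X Op ar) (s : OPoly X Op ar k) (ws : OW X Op ar),
          s ∈ S ∧ IsLw s ws ∧ w = c.subst ws)) ∧
    (IsGSB S ↔
      (LinearIndependent k
          (fun w : {w : OW X Op ar // ¬ ∃ (c : OCtx X Op ar) (s : OPoly X Op ar k)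
              (ws : OW X Op ar), s ∈ S ∧ IsLw s ws ∧ w = c.subst ws} =>
            Submodule.Quotient.mk (p := IdS S) (Finsupp.single w.1 (1 : k))) ∧
        Submodule.span k (Set.range
          (fun w : {w : OW X Op ar // ¬ ∃ (c : OCtx X Op ar) (s : OPoly X Op ar k)
              (ws : OW X Op ar), s ∈ S ∧ IsLw s ws ∧ w = c.subst ws} =>
            Submodule.Quotient.mk (p := IdS S) (Finsupp.single w.1 (1 : k)))) = ⊤)) := by
  constructor
  · constructor
    · intro hGSB f hfI hf0 w hw
      exact condII_of_gsb hmon hS hGSB f hfI hf0 w hw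
    · intro hII
      exact gsb_of_li hmon hS (li_of_condII hII)
  · constructor
    · intro hGSB
      refine ⟨li_of_condII (condII_of_gsb hmon hS hGSB), ?_⟩
      rw [eq_top_iff]
      rintro x -
      obtain ⟨f, rfl⟩ := Submodule.Quotient.mk_surjective _ x
      exact span_irr hmon hS f
    · rintro ⟨hLI, -⟩
      exact gsb_of_li hmon hS hLI
end
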